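/- Let β, β' ∈ Δ with β ≠ β', and let α, α' ∈ R⁺ be such that s_β s_{β'} = s_α s_{α'} in W. Then α ∈ {β, β'} or α' ∈ {β, β'}. -/

import Mathlib

/- Setting: a reduced, irreducible, crystallographic, simply laced root system `roots`
in a real inner product space `V`, with a fixed base `base` of simple roots,
its Weyl group (generated by the reflections in the simple roots), the length
function, the (strong) Bruhat order, the weak left Bruhat order, the sets
`A_ℓ(v)`, `A(v)`, `D(w)`, `AD(v,w)`, and the partial order on roots induced
by the base. -/

open scoped InnerProductSpace Classical

noncomputable section

variable {V : Type*} [NormedAddCommGroup V] [InnerProductSpace ℝ V]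

/-- The underlying linear map of the reflection `s_α : x ↦ x - (2⟪x,α⟫/⟪α,α⟫) α`. -/
def reflMap (α : V) : V →ₗ[ℝ] V where
  toFun x := x - (2 * ⟪x, α⟫_ℝ / ⟪α, α⟫_ℝ) • α
  map_add' x y := by
    simp only [inner_add_left]
    rw [show 2 * (⟪x, α⟫_ℝ + ⟪y, α⟫_ℝ) / ⟪α, α⟫_ℝ
        = 2 * ⟪x, α⟫_ℝ / ⟪α, α⟫_ℝ + 2 * ⟪y, α⟫_ℝ / ⟪α, α⟫_ℝ by ring]
    rw [add_smul]
    abel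
  map_smul' c x := by
    simp only [real_inner_smul_left, RingHom.id_apply, smul_sub, smul_smul]
    rw [show 2 * (c * ⟪x, α⟫_ℝ) / ⟪α, α⟫_ℝ = c * (2 * ⟪x, α⟫_ℝ / ⟪α, α⟫_ℝ) by ring]

theorem reflMap_involutive (α : V) : Function.Involutive (reflMap α) := by
  intro x
  by_cases h : (⟪α, α⟫_ℝ) = (0 : ℝ)
  · have hα : α = 0 := inner_self_eq_zero.mp h
    simp [reflMap, hα]
  · show reflMap α (x - (2 * ⟪x, α⟫_ℝ / ⟪α, α⟫_ℝ) • α) = x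
    show (x - (2 * ⟪x, α⟫_ℝ / ⟪α, α⟫_ℝ) • α)
        - (2 * ⟪x - (2 * ⟪x, α⟫_ℝ / ⟪α, α⟫_ℝ) • α, α⟫_ℝ / ⟪α, α⟫_ℝ) • α = x
    have h1 : ⟪x - (2 * ⟪x, α⟫_ℝ / ⟪α, α⟫_ℝ) • α, α⟫_ℝ = -⟪x, α⟫_ℝ := by
      rw [inner_sub_left, real_inner_smul_left]
      field_simp
      ring
    rw [h1, show 2 * -⟪x, α⟫_ℝ / ⟪α, α⟫_ℝ = -(2 * ⟪x, α⟫_ℝ / ⟪α, α⟫_ℝ) by ring,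
      neg_smul, sub_neg_eq_add, sub_add_cancel]

/-- The reflection `s_α` in the hyperplane orthogonal to `α`,
as a linear automorphism of `V`. -/
def sRefl (α : V) : V ≃ₗ[ℝ] V := LinearEquiv.ofInvolutive (reflMap α) (reflMap_involutive α)

/-- A reduced, irreducible, crystallographic, simply laced root system in the real
inner product space `V`, together with a choice of base (system of simple roots)
and the corresponding coordinate function `coeff α β = n_β(α)`. -/
structure SimplyLacedRootSystem (V : Type*) [NormedAddCommGroup V]
    [InnerProductSpace ℝ V] : Type _ where
  /-- the set `R` of roots -/
  roots : Set V
  /-- the base `Δ` of simple roots -/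
  base : Finset V
  finite : roots.Finite
  nonzero : ∀ α ∈ roots, α ≠ 0
  span_eq_top : Submodule.span ℝ roots = ⊤
  /-- the root system is reduced -/
  reduced : ∀ α ∈ roots, ∀ t : ℝ, t • α ∈ roots → t = 1 ∨ t = -1
  /-- the root system is crystallographic: all `⟨γ,α⟩ = 2(γ,α)/(α,α)` are integers -/
  crystallographic : ∀ α ∈ roots, ∀ γ ∈ roots, ∃ n : ℤ, 2 * ⟪γ, α⟫_ℝ / ⟪α, α⟫_ℝ = (n : ℝ)
  reflect_mem : ∀ α ∈ roots, ∀ γ ∈ roots, sRefl α γ ∈ roots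
  /-- the root system is simply laced: all roots have the same length -/
  simplyLaced : ∀ α ∈ roots, ∀ γ ∈ roots, ⟪α, α⟫_ℝ = ⟪γ, γ⟫_ℝ
  /-- the root system is irreducible -/
  irreducible : ∀ R₁ R₂ : Set V, R₁ ∪ R₂ = roots →
    (∀ α ∈ R₁, ∀ γ ∈ R₂, ⟪α, γ⟫_ℝ = 0) → R₁ = ∅ ∨ R₂ = ∅
  base_subset : ↑base ⊆ roots
  base_indep : LinearIndependent ℝ (Subtype.val : {x : V // x ∈ base} → V)
  /-- `coeff α β` is the coefficient `n_β(α)` of the simple root `β` in `α` -/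
  coeff : V → V → ℝ
  coeff_spec : ∀ α ∈ roots, α = ∑ β ∈ base, coeff α β • β
  coeff_int : ∀ α ∈ roots, ∀ β ∈ base, ∃ n : ℤ, coeff α β = (n : ℝ)
  coeff_sign : ∀ α ∈ roots, (∀ β ∈ base, 0 ≤ coeff α β) ∨ (∀ β ∈ base, coeff α β ≤ 0)

namespace SimplyLacedRootSystem

variable (P : SimplyLacedRootSystem V)

/-- The set `R⁺` of positive roots. -/
def pos : Set V := {α ∈ P.roots | ∀ β ∈ P.base, 0 ≤ P.coeff α β}

/-- The support `Δ(α) = {β ∈ Δ : n_β(α) > 0}` of a (positive) root `α`. -/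
def support (α : V) : Finset V := P.base.filter (fun β => 0 < P.coeff α β)

/-- `N⁺(α,β) = {β' ∈ Δ(α) : (β,β') < 0 and (α,β') > 0}`. -/
def Nplus (α β : V) : Finset V :=
  (P.support α).filter (fun β' => ⟪β, β'⟫_ℝ < 0 ∧ 0 < ⟪α, β'⟫_ℝ)

/-- `N⁻(α,β) = {β' ∈ Δ(α) : (β,β') < 0 and (α,β') ≤ 0}`. -/
def Nminus (α β : V) : Finset V :=
  (P.support α).filter (fun β' => ⟪β, β'⟫_ℝ < 0 ∧ ⟪α, β'⟫_ℝ ≤ 0)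

/-- The partial order on `V` induced by the base: `x ≤ y` iff `y - x` is a
nonnegative linear combination of the simple roots. -/
def rle (x y : V) : Prop :=
  ∃ c : V → ℝ, (∀ β, 0 ≤ c β) ∧ y - x = ∑ β ∈ P.base, c β • β

/-- The strict version of the partial order `rle` on roots. -/
def rlt (x y : V) : Prop := P.rle x y ∧ x ≠ y

/-- `α` is a minimal element of the set `S` with respect to the partial order on roots. -/
def IsMinimalIn (α : V) (S : Set V) : Prop := α ∈ S ∧ ∀ γ ∈ S, ¬ P.rlt γ α

/-- The Weyl group `W`, i.e. the subgroup of `GL(V)` generated by the reflections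
in the simple roots (equivalently, by all the reflections `s_α`, `α ∈ R`). -/
def weyl : Subgroup (V ≃ₗ[ℝ] V) := Subgroup.closure (sRefl '' ↑P.base)

/-- The length function `ℓ` of `W` with respect to the simple reflections. -/
def len (w : V ≃ₗ[ℝ] V) : ℕ :=
  sInf {n | ∃ l : List V, l.length = n ∧ (∀ β ∈ l, β ∈ P.base) ∧ (l.map sRefl).prod = w}

/-- One step in the Bruhat order: multiplication by the reflection of a positive
root which increases the length. -/
def bStep (u w : V ≃ₗ[ℝ] V) : Prop :=
  ∃ α ∈ P.pos, w = sRefl α * u ∧ P.len u < P.len w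

/-- The (strong) Bruhat order `≤` on `W`. -/
def ble : (V ≃ₗ[ℝ] V) → (V ≃ₗ[ℝ] V) → Prop := Relation.ReflTransGen P.bStep

/-- The strict (strong) Bruhat order `<` on `W`. -/
def blt (u w : V ≃ₗ[ℝ] V) : Prop := P.ble u w ∧ u ≠ w

/-- The covering relation `⋖` of the Bruhat order. -/
def bcov (u w : V ≃ₗ[ℝ] V) : Prop := P.blt u w ∧ P.len w = P.len u + 1

/-- One step in the weak left Bruhat order. -/
def wlStep (u w : V ≃ₗ[ℝ] V) : Prop :=
  ∃ β ∈ P.base, w = sRefl β * u ∧ P.len u < P.len w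

/-- The weak left Bruhat order `≤_ℓ` on `W`. -/
def wle : (V ≃ₗ[ℝ] V) → (V ≃ₗ[ℝ] V) → Prop := Relation.ReflTransGen P.wlStep

/-- `A_ℓ(v) = {β ∈ Δ : v < s_β v}`. -/
def Al (v : V ≃ₗ[ℝ] V) : Set V := {β : V | β ∈ P.base ∧ P.blt v (sRefl β * v)}

/-- `A(v) = {α ∈ R⁺ : v⁻¹(α) > 0}`. -/
def A (v : V ≃ₗ[ℝ] V) : Set V := {α ∈ P.pos | v⁻¹ α ∈ P.pos}

/-- `D(w) = {α ∈ R⁺ : w⁻¹(α) < 0}`. -/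
def Dset (w : V ≃ₗ[ℝ] V) : Set V := {α ∈ P.pos | -(w⁻¹ α) ∈ P.pos}

/-- `AD(v,w) = A(v) ∩ D(w)`. -/
def ADset (v w : V ≃ₗ[ℝ] V) : Set V := P.A v ∩ P.Dset w

end SimplyLacedRootSystem

/-! If `α = α'` then `s_β s_{β'} = 1`, which is impossible for independent `β, β'`. Otherwise
`α, α'` are independent, so every vector fixed by `s_α s_{α'}` is orthogonal to `α` and `α'`;
since `s_β s_{β'} = s_α s_{α'}` fixes `{β, β'}ᗮ`, both `α` and `α'` lie in
`{β, β'}ᗮᗮ = span {β, β'}`.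
In a simply laced root system the positive roots in this span are `β`, `β'` and `β + β'`: their
coefficients `a, b ∈ ℕ` satisfy `a² + b² = 1` or `a² - ab + b² = 1`. Two distinct roots cannot
both be `β + β'`. -/

lemma sRefl_apply (γ x : V) : sRefl γ x = x - (2 * ⟪x, γ⟫_ℝ / ⟪γ, γ⟫_ℝ) • γ := rfl

lemma sRefl_sRefl (γ x : V) : sRefl γ (sRefl γ x) = x := reflMap_involutive γ x

lemma sRefl_mul_self (γ : V) : sRefl γ * sRefl γ = 1 := LinearEquiv.ext (sRefl_sRefl γ)

lemma sRefl_apply_of_inner_eq_zero {γ x : V} (h : ⟪x, γ⟫_ℝ = 0) : sRefl γ x = x := by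
  simp [sRefl_apply, h]

lemma sRefl_apply_self {γ : V} (hγ : γ ≠ 0) : sRefl γ γ = -γ := by
  rw [sRefl_apply, mul_div_assoc, div_self (inner_self_ne_zero.2 hγ)]
  module

lemma sRefl_mul_sRefl_ne_one {β β' : V} (h : LinearIndependent ℝ ![β, β']) :
    sRefl β * sRefl β' ≠ 1 := by
  intro h1
  have hfix : sRefl β (sRefl β' β') = β' := LinearEquiv.congr_fun h1 β'
  rw [sRefl_apply_self (by simpa using h.ne_zero 1), map_neg, sRefl_apply] at hfix
  have := LinearIndependent.pair_iff.1 h (2 * ⟪β', β⟫_ℝ / ⟪β, β⟫_ℝ) (-2)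
    (by linear_combination (norm := module) hfix)
  norm_num at this

lemma inner_eq_zero_of_sRefl_mul_sRefl_apply_eq {α α' x : V}
    (h : LinearIndependent ℝ ![α, α']) (hx : (sRefl α * sRefl α') x = x) :
    ⟪x, α⟫_ℝ = 0 ∧ ⟪x, α'⟫_ℝ = 0 := by
  have hswap : sRefl α' x = sRefl α x := by
    calc sRefl α' x = sRefl α (sRefl α (sRefl α' x)) := (sRefl_sRefl α _).symm
      _ = sRefl α x := by rw [← LinearEquiv.mul_apply (sRefl α) (sRefl α'), hx]
  rw [sRefl_apply, sRefl_apply] at hswap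
  obtain ⟨hc, hc'⟩ := LinearIndependent.pair_iff.1 h (2 * ⟪x, α⟫_ℝ / ⟪α, α⟫_ℝ)
    (-(2 * ⟪x, α'⟫_ℝ / ⟪α', α'⟫_ℝ))
    (by linear_combination (norm := module) hswap)
  have hα : α ≠ 0 := by simpa using h.ne_zero 0
  have hα' : α' ≠ 0 := by simpa using h.ne_zero 1
  constructor
  · simpa [hα] using hc
  · simpa [hα'] using hc'

lemma mem_span_pair_of_sRefl_mul_sRefl_eq {α α' β β' : V}
    (h : LinearIndependent ℝ ![α, α']) (heq : sRefl β * sRefl β' = sRefl α * sRefl α') :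
    α ∈ Submodule.span ℝ {β, β'} ∧ α' ∈ Submodule.span ℝ {β, β'} := by
  set K := Submodule.span ℝ ({β, β'} : Set V)
  have : FiniteDimensional ℝ K := FiniteDimensional.span_of_finite ℝ (Set.toFinite _)
  have hperp : ∀ x ∈ Kᗮ, ⟪x, α⟫_ℝ = 0 ∧ ⟪x, α'⟫_ℝ = 0 := by
    intro x hx
    have hβ : ⟪x, β⟫_ℝ = 0 := (K.mem_orthogonal' x).1 hx β (Submodule.subset_span (by simp))
    have hβ' : ⟪x, β'⟫_ℝ = 0 := (K.mem_orthogonal' x).1 hx β' (Submodule.subset_span (by simp))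
    apply inner_eq_zero_of_sRefl_mul_sRefl_apply_eq h
    rw [← heq, LinearEquiv.mul_apply, sRefl_apply_of_inner_eq_zero hβ',
      sRefl_apply_of_inner_eq_zero hβ]
  rw [← K.orthogonal_orthogonal, Kᗮ.mem_orthogonal, Kᗮ.mem_orthogonal]
  exact ⟨fun x hx => (hperp x hx).1, fun x hx => (hperp x hx).2⟩

lemma sq_add_sq_eq_one_or_of_inner_self_eq {β β' : V} {a b : ℝ}
    (hβ' : ⟪β', β'⟫_ℝ = ⟪β, β⟫_ℝ) (hβ : ⟪β, β⟫_ℝ ≠ 0)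
    (hnorm : ⟪a • β + b • β', a • β + b • β'⟫_ℝ = ⟪β, β⟫_ℝ)
    (hangle : ⟪β, β'⟫_ℝ = 0 ∨ 2 * ⟪β, β'⟫_ℝ = -⟪β, β⟫_ℝ) :
    a ^ 2 + b ^ 2 = 1 ∨ a ^ 2 + b ^ 2 = a * b + 1 := by
  have hexp : ⟪a • β + b • β', a • β + b • β'⟫_ℝ
      = (a ^ 2 + b ^ 2) * ⟪β, β⟫_ℝ + a * b * (2 * ⟪β, β'⟫_ℝ) := by
    simp only [real_inner_add_add_self, real_inner_smul_left, real_inner_smul_right, hβ']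
    ring
  rw [hexp] at hnorm
  rcases hangle with h | h
  · left
    rw [h] at hnorm
    exact mul_right_cancel₀ hβ (by linear_combination hnorm)
  · right
    rw [h] at hnorm
    exact mul_right_cancel₀ hβ (by linear_combination hnorm)

lemma Int.eq_of_sq_add_sq_eq_one_or {a b : ℤ} (ha : 0 ≤ a) (hb : 0 ≤ b)
    (h : a ^ 2 + b ^ 2 = 1 ∨ a ^ 2 + b ^ 2 = a * b + 1) :
    (a = 1 ∧ b = 0) ∨ (a = 0 ∧ b = 1) ∨ (a = 1 ∧ b = 1) := by
  have ha1 : a ≤ 1 := by rcases h with h | h <;> nlinarith [sq_nonneg (a - b)]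
  have hb1 : b ≤ 1 := by rcases h with h | h <;> nlinarith [sq_nonneg (a - b)]
  interval_cases a <;> interval_cases b <;> omega

namespace SimplyLacedRootSystem

variable {P : SimplyLacedRootSystem V}

lemma coeff_eq_zero_of_sum_smul_eq_zero {c : V → ℝ} (h : ∑ δ ∈ P.base, c δ • δ = 0) :
    ∀ δ ∈ P.base, c δ = 0 := by
  intro δ hδ
  refine linearIndependent_iff'.1 P.base_indep P.base.attach (fun i => c i) ?_ ⟨δ, hδ⟩
    (Finset.mem_attach _ _)
  rwa [Finset.sum_attach P.base (fun δ => c δ • δ)]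

lemma linearIndependent_pair_of_mem_base {β β' : V} (hβ : β ∈ P.base) (hβ' : β' ∈ P.base)
    (hne : β ≠ β') : LinearIndependent ℝ ![β, β'] := by
  have := P.base_indep.comp ![⟨β, hβ⟩, ⟨β', hβ'⟩] (injective_pair_iff_ne.2 (by simpa using hne))
  convert this using 1
  ext i
  fin_cases i <;> rfl

lemma coeff_eq_of_eq_smul_add_smul {β β' γ : V} {a b : ℝ} (hβ : β ∈ P.base)
    (hβ' : β' ∈ P.base) (hne : β ≠ β') (hγ : γ ∈ P.roots) (h : a • β + b • β' = γ) :
    P.coeff γ β = a ∧ P.coeff γ β' = b := by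
  set c : V → ℝ := fun δ => P.coeff γ δ - (if δ = β then a else 0) - (if δ = β' then b else 0)
  have hc : ∑ δ ∈ P.base, c δ • δ = 0 := by
    simp only [c, sub_smul, ite_smul, zero_smul, Finset.sum_sub_distrib, Finset.sum_ite_eq',
      hβ, hβ', if_true]
    rw [← P.coeff_spec γ hγ, ← h]
    abel
  have hcβ := coeff_eq_zero_of_sum_smul_eq_zero hc β hβ
  have hcβ' := coeff_eq_zero_of_sum_smul_eq_zero hc β' hβ'
  simp only [c, if_neg hne, if_neg hne.symm, ↓reduceIte] at hcβ hcβ'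
  constructor <;> linarith

lemma inner_self_ne_zero_of_mem_roots {γ : V} (hγ : γ ∈ P.roots) : ⟪γ, γ⟫_ℝ ≠ 0 :=
  inner_self_ne_zero.2 (P.nonzero γ hγ)

lemma inner_eq_zero_or_two_mul_inner_eq_neg {β β' : V} (hβ : β ∈ P.base) (hβ' : β' ∈ P.base)
    (hne : β ≠ β') : ⟪β, β'⟫_ℝ = 0 ∨ 2 * ⟪β, β'⟫_ℝ = -⟪β, β⟫_ℝ := by
  have hβr := P.base_subset hβ
  have hN := inner_self_ne_zero_of_mem_roots hβr
  obtain ⟨m, hm⟩ := P.crystallographic β hβr β' (P.base_subset hβ')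
  have hcartan : 2 * ⟪β, β'⟫_ℝ = m * ⟪β, β⟫_ℝ := by
    rw [real_inner_comm, ← hm, div_mul_cancel₀ _ hN]
  have hm_nonpos : m ≤ 0 := by
    have hrefl : (-m : ℝ) • β + (1 : ℝ) • β' = sRefl β β' := by
      rw [sRefl_apply, hm]
      module
    have hrefl_mem := P.reflect_mem β hβr β' (P.base_subset hβ')
    obtain ⟨hcβ, hcβ'⟩ := coeff_eq_of_eq_smul_add_smul hβ hβ' hne hrefl_mem hrefl
    rcases P.coeff_sign _ hrefl_mem with h | h
    · have := h β hβ
      rw [hcβ] at this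
      exact_mod_cast neg_nonneg.1 this
    · have := h β' hβ'
      rw [hcβ'] at this
      norm_num at this
  have hm_gt : -2 < m := by
    have hsum : β + β' ≠ 0 := fun h0 => by
      simpa using LinearIndependent.pair_iff.1 (linearIndependent_pair_of_mem_base hβ hβ' hne)
        1 1 (by simpa using h0)
    have hpos : 0 < ⟪β + β', β + β'⟫_ℝ := real_inner_self_pos.2 hsum
    have hNpos : 0 < ⟪β, β⟫_ℝ := real_inner_self_pos.2 (P.nonzero β hβr)
    rw [real_inner_add_add_self, P.simplyLaced β' (P.base_subset hβ') β hβr, hcartan] at hpos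
    have : (-2 : ℝ) < m := by nlinarith
    exact_mod_cast this
  obtain rfl | rfl : m = 0 ∨ m = -1 := by omega
  · left; simpa using hcartan
  · right; simpa using hcartan

lemma neg_notMem_pos {α : V} (hα : α ∈ P.pos) : -α ∉ P.pos := by
  intro hneg
  have hcoeff : ∀ δ ∈ P.base, P.coeff α δ = 0 := by
    intro δ hδ
    have hspec : ∑ δ ∈ P.base, (P.coeff α δ + P.coeff (-α) δ) • δ = 0 := by
      simp only [add_smul, Finset.sum_add_distrib, ← P.coeff_spec α hα.1,
        ← P.coeff_spec (-α) hneg.1, add_neg_cancel]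
    have := coeff_eq_zero_of_sum_smul_eq_zero hspec δ hδ
    linarith [hα.2 δ hδ, hneg.2 δ hδ]
  apply P.nonzero α hα.1
  rw [P.coeff_spec α hα.1]
  exact Finset.sum_eq_zero fun δ hδ => by rw [hcoeff δ hδ, zero_smul]

lemma linearIndependent_pair_of_mem_pos {α α' : V} (hα : α ∈ P.pos) (hα' : α' ∈ P.pos)
    (hne : α ≠ α') : LinearIndependent ℝ ![α, α'] := by
  refine LinearIndependent.pair_iff.2 fun s t hst => ?_
  have hs : s = 0 := by
    by_contra hs
    have hα_eq : α = (-t / s) • α' := by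
      rw [div_eq_inv_mul, mul_smul, neg_smul, ← eq_neg_of_add_eq_zero_left hst, smul_smul,
        inv_mul_cancel₀ hs, one_smul]
    rcases P.reduced α' hα'.1 _ (hα_eq ▸ hα.1) with h | h
    · exact hne (by rw [hα_eq, h, one_smul])
    · exact neg_notMem_pos hα' (by rwa [hα_eq, h, neg_one_smul] at hα)
  subst hs
  rw [zero_smul, zero_add, smul_eq_zero] at hst
  exact ⟨rfl, hst.resolve_right (P.nonzero α' hα'.1)⟩

lemma eq_or_eq_or_eq_add_of_mem_span_pair {β β' α : V} (hβ : β ∈ P.base)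
    (hβ' : β' ∈ P.base) (hne : β ≠ β') (hα : α ∈ P.pos)
    (hspan : α ∈ Submodule.span ℝ {β, β'}) : α = β ∨ α = β' ∨ α = β + β' := by
  obtain ⟨a, b, hab⟩ := Submodule.mem_span_pair.1 hspan
  obtain ⟨hca, hcb⟩ := coeff_eq_of_eq_smul_add_smul hβ hβ' hne hα.1 hab
  obtain ⟨na, hna⟩ := P.coeff_int α hα.1 β hβ
  obtain ⟨nb, hnb⟩ := P.coeff_int α hα.1 β' hβ'
  have hna0 : (0 : ℝ) ≤ na := hna ▸ hα.2 β hβ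
  have hnb0 : (0 : ℝ) ≤ nb := hnb ▸ hα.2 β' hβ'
  have hβr := P.base_subset hβ
  have hquad := sq_add_sq_eq_one_or_of_inner_self_eq (a := a) (b := b)
    (P.simplyLaced β' (P.base_subset hβ') β hβr) (inner_self_ne_zero_of_mem_roots hβr)
    (by rw [hab]; exact P.simplyLaced α hα.1 β hβr)
    (inner_eq_zero_or_two_mul_inner_eq_neg hβ hβ' hne)
  rw [← hca, ← hcb, hna, hnb] at hquad
  rw [← hab, ← hca, ← hcb, hna, hnb]
  rcases Int.eq_of_sq_add_sq_eq_one_or (by exact_mod_cast hna0) (by exact_mod_cast hnb0)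
    (by exact_mod_cast hquad) with ⟨rfl, rfl⟩ | ⟨rfl, rfl⟩ | ⟨rfl, rfl⟩ <;> simp

end SimplyLacedRootSystem

open SimplyLacedRootSystem in
/-- Let β, β' ∈ Δ with β ≠ β', and let α, α' ∈ R⁺ be such that
s_β s_{β'} = s_α s_{α'} in W. Then α ∈ {β, β'} or α' ∈ {β, β'}. -/
theorem stmt16 (P : SimplyLacedRootSystem V)
    (β β' : V) (hβ : β ∈ P.base) (hβ' : β' ∈ P.base) (hne : β ≠ β')
    (α α' : V) (hα : α ∈ P.pos) (hα' : α' ∈ P.pos)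
    (heq : sRefl β * sRefl β' = sRefl α * sRefl α') :
    α ∈ ({β, β'} : Set V) ∨ α' ∈ ({β, β'} : Set V) := by
  have hαα' : α ≠ α' := by
    rintro rfl
    exact sRefl_mul_sRefl_ne_one (linearIndependent_pair_of_mem_base hβ hβ' hne)
      (heq.trans (sRefl_mul_self α))
  obtain ⟨hαspan, hα'span⟩ :=
    mem_span_pair_of_sRefl_mul_sRefl_eq (linearIndependent_pair_of_mem_pos hα hα' hαα') heq
  have hα_cases := eq_or_eq_or_eq_add_of_mem_span_pair hβ hβ' hne hα hαspan
  have hα'_cases := eq_or_eq_or_eq_add_of_mem_span_pair hβ hβ' hne hα' hα'span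
  simp only [Set.mem_insert_iff, Set.mem_singleton_iff]
  grind
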